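/- For the weight function of Case 2 of the RHM analysis, the bound 373/228 is attained in the limit: the items 1/2 + ε, 1/4 + ε, 1/5 + ε together with small items of total size 1/20 − 3ε fit in a bin and have total weight approaching 1 + 1/3 + 1/4 + 1/19 = 373/228 as ε → 0. -/
import Mathlib


open Filter

/-- The weight function of Case 2 of the analysis of Refined Harmonic Match. -/
noncomputable def wCase2 (x : ℝ) : ℝ :=
  if 1 / 2 < x then 1
  else if 37 / 96 < x then 1 / 2
  else if 1 / 3 < x then 3 / 7
  else if 1 / 20 < x then 1 / (⌊1 / x⌋ : ℝ)
  else 20 * x / 19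

/-- The family of bins witnessing tightness: items `1/2 + ε`, `1/4 + ε`, `1/5 + ε`
together with small items of total size `1/20 − 3ε`. -/
noncomputable def tightBin (ε : ℝ) : List ℝ :=
  [1 / 2 + ε, 1 / 4 + ε, 1 / 5 + ε, 1 / 20 - 3 * ε]

lemma wsum_eq (ε : ℝ) (hε : ε ∈ Set.Ioo (0 : ℝ) (1 / 60)) :
    ((tightBin ε).map wCase2).sum = 373 / 228 - 60 * ε / 19 := by
  obtain ⟨h0, h1⟩ := hε
  have e1 : wCase2 (1 / 2 + ε) = 1 := by
    unfold wCase2; rw [if_pos (by linarith)]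
  have p4 : (0:ℝ) < 1 / 4 + ε := by linarith
  have p5 : (0:ℝ) < 1 / 5 + ε := by linarith
  have f4 : ⌊1 / (1 / 4 + ε)⌋ = 3 := by
    rw [Int.floor_eq_iff]
    constructor
    · rw [le_div_iff₀ p4]; push_cast; nlinarith
    · rw [div_lt_iff₀ p4]; push_cast; nlinarith
  have f5 : ⌊1 / (1 / 5 + ε)⌋ = 4 := by
    rw [Int.floor_eq_iff]
    constructor
    · rw [le_div_iff₀ p5]; push_cast; nlinarith
    · rw [div_lt_iff₀ p5]; push_cast; nlinarith
  have e2 : wCase2 (1 / 4 + ε) = 1 / 3 := by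
    unfold wCase2
    rw [if_neg (by linarith), if_neg (by linarith), if_neg (by linarith),
      if_pos (by linarith), f4]
    norm_num
  have e3 : wCase2 (1 / 5 + ε) = 1 / 4 := by
    unfold wCase2
    rw [if_neg (by linarith), if_neg (by linarith), if_neg (by linarith),
      if_pos (by linarith), f5]
    norm_num
  have e4 : wCase2 (1 / 20 - 3 * ε) = 20 * (1 / 20 - 3 * ε) / 19 := by
    unfold wCase2
    rw [if_neg (by linarith), if_neg (by linarith), if_neg (by linarith),
      if_neg (by linarith)]
  simp only [tightBin, List.map, List.sum_cons, List.sum_nil, e1, e2, e3, e4]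
  ring

/-- The bound 373/228 of Case 2 is attained in the limit: for every small `ε > 0`
the items `1/2 + ε`, `1/4 + ε`, `1/5 + ε` together with small items of total size
`1/20 − 3ε` fit in a bin, and their total weight tends to
`1 + 1/3 + 1/4 + 1/19 = 373/228` as `ε → 0⁺`. -/
theorem case2_bound_tight :
    (∀ ε ∈ Set.Ioo (0 : ℝ) (1 / 60),
        (∀ x ∈ tightBin ε, 0 < x ∧ x ≤ 1) ∧ (tightBin ε).sum ≤ 1) ∧
      Tendsto (fun ε => ((tightBin ε).map wCase2).sum)
        (nhdsWithin 0 (Set.Ioi 0)) (nhds (373 / 228)) ∧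
      (373 : ℝ) / 228 = 1 + 1 / 3 + 1 / 4 + 1 / 19 := by
  refine ⟨?_, ?_, by norm_num⟩
  · intro ε ⟨h0, h1⟩
    constructor
    · intro x hx
      simp only [tightBin, List.mem_cons, List.not_mem_nil, or_false] at hx
      rcases hx with rfl | rfl | rfl | rfl <;> constructor <;> linarith
    · simp only [tightBin, List.sum_cons, List.sum_nil]
      linarith
  · have hlim : Tendsto (fun ε : ℝ => 373 / 228 - 60 * ε / 19)
        (nhdsWithin 0 (Set.Ioi 0)) (nhds (373 / 228)) := by
      have : Tendsto (fun ε : ℝ => 373 / 228 - 60 * ε / 19) (nhds 0)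
          (nhds (373 / 228 - 60 * 0 / 19)) := by
        exact (tendsto_const_nhds.sub (((continuous_const.mul continuous_id).div_const 19).tendsto 0))
      simpa using this.mono_left nhdsWithin_le_nhds
    refine hlim.congr' ?_
    filter_upwards [Ioo_mem_nhdsGT_of_mem (by norm_num : (0:ℝ) ∈ Set.Ico 0 (1/60))]
      with ε hε
    exact (wsum_eq ε hε).symm
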